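/- Under the hypotheses 0 < σ < 2s/N and the fractional Gagliardo–Nirenberg inequality, every minimizing sequence {u_n} ⊂ S_c for I_c = inf{J(u) : u ∈ S_c} is bounded in Σ_s(ℝ^N): there exists C > 0 with ‖u_n‖₂ + ‖∇_s u_n‖₂ + ‖|x| u_n‖₂ ≤ C for all n. -/
import Mathlib


open Filter

set_option maxHeartbeats 1000000 in
/-- every minimizing sequence for I_c = inf{J(u) : u ∈ S_c} is bounded
in Σ_s(ℝ^N): there is C > 0 with ‖u_n‖₂ + ‖∇_s u_n‖₂ + ‖|x|u_n‖₂ ≤ C for all n.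
Here `l2 u` = ‖u‖₂, `Gn u` = ‖∇_s u‖₂, `xw u` = ‖|x|u‖₂, `P u` = ∫|u|^{2σ+2}. -/
theorem stmt4 {F : Type*} (N : ℕ) (hN : 1 ≤ N) (s σ K c θ : ℝ)
    (hs0 : 0 < s) (hs1 : s < 1) (hσ0 : 0 < σ) (hσ : σ < 2 * s / N)
    (hK : 0 < K) (hc : 0 < c)
    (hθ : θ = N * σ / (2 * s * (σ + 1)))
    (l2 Gn xw P : F → ℝ)
    (hGn : ∀ u, 0 ≤ Gn u) (hxw : ∀ u, 0 ≤ xw u) (hP : ∀ u, 0 ≤ P u)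
    (hGN : ∀ u : F, (P u) ^ (1 / (2 * σ + 2)) ≤ K * (l2 u) ^ (1 - θ) * (Gn u) ^ θ)
    (J : F → ℝ)
    (hJ : ∀ u, J u = 1 / 2 * (Gn u) ^ 2 + 1 / 2 * (xw u) ^ 2 - P u / (2 * σ + 2))
    (u : ℕ → F) (hS : ∀ n, l2 (u n) = c)
    (hmin : Tendsto (fun n => J (u n)) atTop
      (nhds (sInf (J '' {v | l2 v = c})))) :
    ∃ C > 0, ∀ n, l2 (u n) + Gn (u n) + xw (u n) ≤ C := by
  have hNpos : (0:ℝ) < N := by exact_mod_cast hN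
  set α : ℝ := N * σ / s with hαdef
  have hα0 : 0 < α := div_pos (mul_pos hNpos hσ0) hs0
  have hα2 : α < 2 := by
    have hNσ : σ * N < 2 * s := (lt_div_iff₀ hNpos).mp hσ
    rw [hαdef, div_lt_iff₀ hs0]
    nlinarith
  have hσ2 : (0:ℝ) < 2 * σ + 2 := by linarith
  have hθα : θ * (2 * σ + 2) = α := by
    rw [hθ, hαdef]
    field_simp
  have hθ0 : 0 < θ := by
    rw [hθ]
    positivity
  -- the constant from the Gagliardo–Nirenberg bound
  set A : ℝ := (K * c ^ (1 - θ)) ^ (2 * σ + 2) with hAdef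
  have hA0 : 0 < A := Real.rpow_pos_of_pos (mul_pos hK (Real.rpow_pos_of_pos hc _)) _
  -- P (u n) ≤ A * Gn (u n) ^ α
  have pbound : ∀ n, P (u n) ≤ A * (Gn (u n)) ^ α := by
    intro n
    have h := hGN (u n)
    rw [hS n] at h
    have e1 : P (u n) = ((P (u n)) ^ (1 / (2 * σ + 2))) ^ (2 * σ + 2) := by
      rw [← Real.rpow_mul (hP _), one_div_mul_cancel hσ2.ne', Real.rpow_one]
    have h3 := Real.rpow_le_rpow (Real.rpow_nonneg (hP _) _) h hσ2.le
    rw [← e1] at h3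
    calc P (u n) ≤ (K * c ^ (1 - θ) * (Gn (u n)) ^ θ) ^ (2 * σ + 2) := h3
      _ = A * (Gn (u n)) ^ α := by
          rw [Real.mul_rpow (mul_pos hK (Real.rpow_pos_of_pos hc _)).le
            (Real.rpow_nonneg (hGn _) _), ← Real.rpow_mul (hGn _), hθα]
  -- upper bound for J (u n)
  obtain ⟨M, hM⟩ := hmin.bddAbove_range
  have hMb : ∀ n, J (u n) ≤ M := fun n => hM ⟨n, rfl⟩
  set M' : ℝ := max M 0 + 1 with hM'def
  have hM'1 : (1:ℝ) ≤ M' := by rw [hM'def]; linarith [le_max_right M (0:ℝ)]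
  have hM'0 : (0:ℝ) < M' := lt_of_lt_of_le one_pos hM'1
  -- key pointwise inequality
  have key : ∀ n, 1/2 * (Gn (u n))^2 + 1/2 * (xw (u n))^2 ≤ M' + A * (Gn (u n)) ^ α := by
    intro n
    have h1 := hMb n
    rw [hJ] at h1
    have h2 : P (u n) / (2 * σ + 2) ≤ P (u n) := by
      rw [div_le_iff₀ hσ2]
      nlinarith [hP (u n)]
    have := pbound n
    have : M ≤ M' := by rw [hM'def]; linarith [le_max_left M (0:ℝ)]
    nlinarith [pbound n]
  -- bound on Gn
  set T0 : ℝ := max 1 ((4 * A) ^ (1 / (2 - α))) with hT0def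
  set T : ℝ := max T0 (2 * Real.sqrt M') with hTdef
  have hT0pos : (0:ℝ) < T0 := lt_of_lt_of_le one_pos (le_max_left _ _)
  have hTpos : (0:ℝ) < T := lt_of_lt_of_le hT0pos (le_max_left _ _)
  have gbound : ∀ n, Gn (u n) ≤ T := by
    intro n
    set g := Gn (u n) with hg
    by_cases hcase : g ≤ T0
    · exact hcase.trans (le_max_left _ _)
    · push_neg at hcase
      have hg1 : (1:ℝ) < g := lt_of_le_of_lt (le_max_left _ _) hcase
      have hg0 : (0:ℝ) < g := lt_trans one_pos hg1
      have h4A : 4 * A < g ^ (2 - α) := by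
        have h5 : (4 * A) ^ (1 / (2 - α)) < g := lt_of_le_of_lt (le_max_right _ _) hcase
        have := Real.rpow_lt_rpow (Real.rpow_nonneg (by positivity) _) h5 (by linarith : (0:ℝ) < 2 - α)
        rwa [← Real.rpow_mul (by positivity : (0:ℝ) ≤ 4 * A),
          one_div_mul_cancel (by linarith : (2:ℝ) - α ≠ 0), Real.rpow_one] at this
      have hsplit : A * g ^ α ≤ 1/4 * g ^ 2 := by
        have hmul : (4 * A) * g ^ α ≤ g ^ (2 - α) * g ^ α :=
          mul_le_mul_of_nonneg_right h4A.le (Real.rpow_nonneg hg0.le _)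
        rw [← Real.rpow_add hg0] at hmul
        have : ((2:ℝ) - α) + α = 2 := by ring
        rw [this] at hmul
        have : g ^ (2:ℝ) = g ^ 2 := by
          rw [show ((2:ℝ)) = ((2:ℕ):ℝ) by norm_num, Real.rpow_natCast]
        rw [this] at hmul
        linarith
      have hkey := key n
      have hx2 := sq_nonneg (xw (u n))
      have hg2 : g ^ 2 ≤ 4 * M' := by nlinarith
      have : g ≤ 2 * Real.sqrt M' := by
        have := Real.sqrt_le_sqrt hg2
        rwa [Real.sqrt_sq hg0.le, show (4:ℝ) * M' = (2:ℝ)^2 * M' by norm_num,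
          Real.sqrt_mul (by positivity) , Real.sqrt_sq (by norm_num : (0:ℝ) ≤ 2)] at this
      exact this.trans (le_max_right _ _)
  -- bound on xw
  have xbound : ∀ n, xw (u n) ≤ Real.sqrt (2 * M' + 2 * A * T ^ α) := by
    intro n
    have hkey := key n
    have hgT : A * (Gn (u n)) ^ α ≤ A * T ^ α :=
      mul_le_mul_of_nonneg_left (Real.rpow_le_rpow (hGn _) (gbound n) hα0.le) hA0.le
    have hx2 : (xw (u n)) ^ 2 ≤ 2 * M' + 2 * A * T ^ α := by linarith [sq_nonneg (Gn (u n))]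
    have := Real.sqrt_le_sqrt hx2
    rwa [Real.sqrt_sq (hxw _)] at this
  have hsq := Real.sqrt_nonneg (2 * M' + 2 * A * T ^ α)
  refine ⟨c + T + Real.sqrt (2 * M' + 2 * A * T ^ α) + 1, by linarith, fun n => ?_⟩
  have := gbound n
  have := xbound n
  rw [hS n]
  linarith
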